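/- Let H be a connected bipartite graph with bipartition parts of sizes n_1, n_2 and part-maximum-degrees Delta_1 ≥ Delta_2. If Delta_2 ≥ 2 (i.e., H is not a star), then for all r ≥ 4, R̂_r(H) ≥ (r^2/32)*(Delta_2 - 1)*(n_1 + n_2). -/

import Mathlib

open SimpleGraph Finset

/-- `H` has a copy in `G`: an injective graph homomorphism from `H` to `G`. -/
def HasCopy {W V : Type*} (H : SimpleGraph W) (G : SimpleGraph V) : Prop :=
  ∃ f : H →g G, Function.Injective f

/-- Under the `r`-edge-coloring `c`, some color class of `G` contains a copy of `H`. -/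
def HasMonoCopy {W V : Type*} (H : SimpleGraph W) (G : SimpleGraph V)
    {r : ℕ} (c : Sym2 V → Fin r) : Prop :=
  ∃ i : Fin r, HasCopy H (SimpleGraph.fromRel fun u v => G.Adj u v ∧ c s(u, v) = i)

/-- Degree of a vertex, as the natural cardinality of its neighbor set. -/
noncomputable def deg {V : Type*} (G : SimpleGraph V) (v : V) : ℕ := (G.neighborSet v).ncard

/-!
Call a vertex of `G` high if its degree exceeds `c (Δ₂ - 1)`, where `c = ⌊r/3⌋`. Few edges means
few high vertices: they fit into `N + 1` cells of fewer than `(n₁ + n₂)/2` vertices each, with `N`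
odd and `N + c ≤ r`. Colour an edge between two high vertices by the round-robin colour of their
pair of cells, so that in each of these `N` colours a cell is joined to at most one other cell.
Colour the edges from a low vertex `x` to high vertices with `c` further colours, each used at
most `Δ₂ - 1` times at `x`, and the edges between low vertices greedily with the `N` round-robin
colours under the same bound at every vertex.

In a monochromatic copy of `H`, a vertex of degree at least `Δ₂` sits on a high vertex. In one of
the `N` shared colours no edge joins a high and a low vertex, so by connectivity the whole copy
lies among the high vertices, hence in at most two cells: too few vertices. In one of the `c`
other colours every edge joins a low and a high vertex, so one side of the bipartition lies on
low vertices, although each side contains a vertex of degree at least `Δ₂`.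
-/

section

variable {W V : Type*}

theorem Finset.exists_mem_eq_sup_of_pos {α : Type*} {s : Finset α} {f : α → ℕ}
    (h : 0 < s.sup f) : ∃ a ∈ s, s.sup f = f a :=
  s.exists_mem_eq_sup (nonempty_iff_ne_empty.2 fun hs => by simp [hs] at h) f

theorem Finset.exists_card_fiber_le {α ι : Type*} [Fintype ι] [DecidableEq ι] [Nonempty ι]
    (s : Finset α) {z : ℕ} (hs : #s ≤ Fintype.card ι * z) :
    ∃ f : α → ι, ∀ i, #{a ∈ s | f a = i} ≤ z := by
  classical
  rcases Nat.eq_zero_or_pos z with rfl | hz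
  · exact ⟨fun _ => Classical.arbitrary ι, fun i => by simp_all⟩
  have : NeZero z := ⟨hz.ne'⟩
  obtain ⟨g, hg⟩ : ∃ g : α → ι × Fin z, Set.InjOn g s := by
    obtain ⟨e⟩ : Nonempty (s ↪ ι × Fin z) := Function.Embedding.nonempty_of_card_le (by simpa)
    exact Set.exists_injOn_iff_injective.2 ⟨e, e.injective⟩
  refine ⟨fun a => (g a).1, fun i => ?_⟩
  calc #{a ∈ s | (g a).1 = i} ≤ #(univ : Finset (Fin z)) :=
        card_le_card_of_injOn (fun a => (g a).2) (fun _ _ => mem_univ _) fun a ha b hb hab =>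
          hg (mem_filter.1 ha).1 (mem_filter.1 hb).1
            (Prod.ext ((mem_filter.1 ha).2.trans (mem_filter.1 hb).2.symm) hab)
    _ = z := by simp

theorem card_le_mul_of_injective {C : Type*} [Fintype W] [DecidableEq C] {f : W → V}
    (hf : Function.Injective f) {U : Finset V} {cell : V → C} {z : ℕ}
    (hcell : ∀ x, #{v ∈ U | cell v = x} ≤ z) (hU : ∀ a, f a ∈ U) {S : Finset C}
    (hS : ∀ a, cell (f a) ∈ S) : Fintype.card W ≤ z * #S :=
  card_le_mul_card_image_of_maps_to (s := univ) (f := cell ∘ f) (fun a _ => hS a) z fun x _ =>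
    (card_le_card_of_injOn f (fun a ha => mem_filter.2 ⟨hU a, (mem_filter.1 ha).2⟩)
      hf.injOn).trans (hcell x)

theorem SimpleGraph.Preconnected.of_adj_imp {H : SimpleGraph W} (hH : H.Preconnected)
    {p : W → Prop} (hp : ∀ a b, H.Adj a b → p a → p b) {a : W} (ha : p a) (b : W) : p b := by
  obtain ⟨walk⟩ := hH a b
  induction walk with
  | nil => exact ha
  | cons hadj _ ih => exact ih (hp _ _ hadj ha)

theorem SimpleGraph.Preconnected.not_and_of_adj_iff_not {H : SimpleGraph W}
    (hH : H.Preconnected) {V₁ V₂ : Set W} (hdisj : Disjoint V₁ V₂)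
    (hbip : ∀ a b, H.Adj a b → (a ∈ V₁ ∧ b ∈ V₂) ∨ (a ∈ V₂ ∧ b ∈ V₁))
    {p : W → Prop} (hp : ∀ a b, H.Adj a b → (p a ↔ ¬p b)) {a b : W} (ha : a ∈ V₁)
    (hb : b ∈ V₂) : ¬(p a ∧ p b) := by
  have hside : ∀ a b, H.Adj a b → (a ∈ V₁ ↔ b ∉ V₁) := fun a b hab => by
    rcases hbip a b hab with ⟨ha, hb⟩ | ⟨ha, hb⟩
    · exact iff_of_true ha (hdisj.notMem_of_mem_right hb)
    · exact iff_of_false (hdisj.notMem_of_mem_right ha) (not_not.2 hb)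
  rintro ⟨hpa, hpb⟩
  have := hH.of_adj_imp (p := fun c => p c ↔ c ∈ V₁)
    (fun c d hcd h => by rw [hp c d hcd, hside c d hcd] at h; tauto) (iff_of_true hpa ha) b
  exact hdisj.notMem_of_mem_right hb (this.1 hpb)

/-- The hypothesis `hinj` says that `κ` is a proper edge colouring of the complete graph on `C`. -/
theorem SimpleGraph.Preconnected.exists_card_le_two_of_mono {C β : Type*} [Fintype C]
    [DecidableEq C] {H : SimpleGraph W} (hH : H.Preconnected) {κ : Sym2 C → β}
    (hinj : ∀ x, Set.InjOn (fun y => κ s(x, y)) {y | y ≠ x}) {g : W → C} {b : β}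
    (hg : ∀ a a', H.Adj a a' → g a ≠ g a' → κ s(g a, g a') = b) :
    ∃ S : Finset C, #S ≤ 2 ∧ ∀ a, g a ∈ S := by
  classical
  rcases isEmpty_or_nonempty W with hW | ⟨⟨a₀⟩⟩
  · exact ⟨∅, by simp, isEmptyElim⟩
  set x := g a₀
  set T : Finset C := {y | y ≠ x ∧ κ s(x, y) = b}
  have hmemT {y} : y ∈ T ↔ y ≠ x ∧ κ s(x, y) = b := by simp [T]
  have hT : #T ≤ 1 := card_le_one.2 fun y hy y' hy' => by
    rw [hmemT] at hy hy'
    exact hinj x hy.1 hy'.1 (hy.2.trans hy'.2.symm)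
  refine ⟨insert x T, (card_insert_le _ _).trans (by omega),
    hH.of_adj_imp (fun a a' haa' ha => ?_) (mem_insert_self x T)⟩
  by_cases heq : g a = g a'
  · exact heq ▸ ha
  have hb := hg a a' haa' heq
  rcases mem_insert.1 ha with hx | hy
  · exact mem_insert_of_mem (hmemT.2 ⟨hx ▸ Ne.symm heq, hx ▸ hb⟩)
  · rw [hmemT] at hy
    refine mem_insert.2 (.inl (hinj (g a) (Ne.symm heq) hy.1.symm ?_))
    dsimp only
    rw [hb, Sym2.eq_swap, hy.2]

theorem deg_le_deg_of_injective [Finite V] {H : SimpleGraph W} {G : SimpleGraph V}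
    (f : H →g G) (hf : Function.Injective f) (a : W) : deg H a ≤ deg G (f a) :=
  Set.ncard_le_ncard_of_injOn f (fun _ hb => f.map_adj hb) hf.injOn

theorem SimpleGraph.card_lt_degree_mul_le [Fintype V] (G : SimpleGraph V) [DecidableRel G.Adj]
    (n : ℕ) : #{v | n < G.degree v} * (n + 1) ≤ 2 * #G.edgeFinset := by
  calc #{v | n < G.degree v} * (n + 1) ≤ ∑ v ∈ {v | n < G.degree v}, G.degree v := by
        rw [← smul_eq_mul]
        exact card_nsmul_le_sum _ _ _ fun v hv => (mem_filter.1 hv).2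
    _ ≤ ∑ v, G.degree v := sum_le_sum_of_subset (subset_univ _)
    _ = 2 * #G.edgeFinset := G.sum_degrees_eq_twice_card_edges

theorem sq_mul_le_of_four_le {r m : ℕ} (hr : 4 ≤ r) (hm : r ^ 2 ≤ m) :
    r ^ 2 * m ≤ 16 * (r / 3) * (2 * ((r - r / 3 + 1) / 2) * ((m - 1) / 2) + 1) := by
  set c := r / 3
  set w := (r - c + 1) / 2
  set z := (m - 1) / 2
  have hk : r - c ≤ 2 * w := by omega
  have hz : m ≤ 2 * z + 2 := by omega
  have hc : 1 ≤ c := by omega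
  have h9 : 9 * r ^ 2 ≤ 64 * c * (r - c) := by
    obtain ⟨e, he, hr⟩ : ∃ e < 3, r = 3 * c + e :=
      ⟨r % 3, Nat.mod_lt _ (by norm_num), (Nat.div_add_mod r 3).symm⟩
    rw [hr, show 3 * c + e - c = 2 * c + e by omega]
    nlinarith
  have h1 : 9 * r ^ 2 * (2 * z) ≤ 64 * c * (2 * w) * (2 * z) :=
    Nat.mul_le_mul_right _ (h9.trans (Nat.mul_le_mul_left _ hk))
  have h2 : r ^ 2 * m ≤ r ^ 2 * (2 * z + 2) := Nat.mul_le_mul_left _ hz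
  have h3 : 8 * r ^ 2 ≤ r ^ 2 * z + 64 * c := by
    rcases le_or_gt 8 z with h8 | h8
    · nlinarith
    · have : r = 4 := by nlinarith
      subst this
      omega
  nlinarith

theorem SimpleGraph.card_lt_degree_le [Fintype V] (G : SimpleGraph V) [DecidableRel G.Adj]
    {r m D : ℕ} (hr : 4 ≤ r) (hm : r ^ 2 ≤ m) (hE : 32 * #G.edgeFinset < r ^ 2 * D * m) :
    #{v | r / 3 * D < G.degree v} ≤ 2 * ((r - r / 3 + 1) / 2) * ((m - 1) / 2) := by
  set K := 2 * ((r - r / 3 + 1) / 2) * ((m - 1) / 2)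
  set n := #{v | r / 3 * D < G.degree v}
  have h1 : n * (r / 3 * D + 1) ≤ 2 * #G.edgeFinset := G.card_lt_degree_mul_le _
  have h2 : r ^ 2 * m * D ≤ 16 * (r / 3) * (K + 1) * D :=
    Nat.mul_le_mul_right D (sq_mul_le_of_four_le hr hm)
  have : n * (r / 3 * D + 1) < (K + 1) * (r / 3 * D + 1) := by nlinarith
  exact Nat.lt_succ_iff.1 (Nat.lt_of_mul_lt_mul_right this)

theorem exists_coloring_card_incident_le {κ : Type*} [Fintype κ] [DecidableEq κ] [Nonempty κ]
    [DecidableEq V] (F : Finset (Sym2 V)) {g D : ℕ} (hκ : 2 * g ≤ Fintype.card κ + 1)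
    (hF : ∀ v, #{e ∈ F | v ∈ e} ≤ g * D) :
    ∃ φ : Sym2 V → κ, ∀ v j, #{e ∈ F | v ∈ e ∧ φ e = j} ≤ D := by
  induction F using Finset.induction_on with
  | empty => exact ⟨fun _ => Classical.arbitrary κ, by simp⟩
  | insert e F he ih =>
    obtain ⟨φ, hφ⟩ := ih fun v =>
      (card_le_card (filter_subset_filter _ (subset_insert e F))).trans (hF v)
    let full (v : V) : Finset κ := {j | D ≤ #{e ∈ F | v ∈ e ∧ φ e = j}}
    have hfull : ∀ v ∈ e, #(full v) < g := by
      intro v hv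
      have hcount : D * #(full v) + 1 ≤ g * D := by
        calc D * #(full v) + 1 ≤ #{e ∈ F | v ∈ e} + 1 := by
              gcongr
              refine (mul_card_image_le_card_of_maps_to (s := {e ∈ F | v ∈ e ∧ φ e ∈ full v})
                (fun e he => (mem_filter.1 he).2.2) D fun j hj => ?_).trans
                (card_le_card fun e he => by simp_all)
              exact (mem_filter.1 hj).2.trans (card_le_card fun e he => by simp_all)
          _ = #{e' ∈ insert e F | v ∈ e'} := by
              rw [filter_insert, if_pos hv, card_insert_of_notMem (by simp [he])]
          _ ≤ g * D := hF v
      exact Nat.lt_of_mul_lt_mul_left (a := D) (by rw [mul_comm g] at hcount; omega)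
    obtain ⟨j, -, hj⟩ : ∃ j ∈ univ, ∀ v ∈ e, j ∉ full v := by
      induction e using Sym2.ind with
      | _ x y =>
      obtain ⟨j, hj, hjxy⟩ := exists_mem_notMem_of_card_lt_card (s := full x ∪ full y)
        (t := univ) (by
          have := card_union_le (full x) (full y)
          have := hfull x (Sym2.mem_mk_left x y)
          have := hfull y (Sym2.mem_mk_right x y)
          rw [card_univ]; omega)
      refine ⟨j, hj, fun v hv => ?_⟩
      rcases Sym2.mem_iff.1 hv with rfl | rfl <;> simp_all
    refine ⟨Function.update φ e j, fun v i => ?_⟩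
    have hF : {e' ∈ F | v ∈ e' ∧ Function.update φ e j e' = i} =
        {e' ∈ F | v ∈ e' ∧ φ e' = i} :=
      filter_congr fun e' he' => by rw [Function.update_of_ne (ne_of_mem_of_not_mem he' he)]
    rw [filter_insert, Function.update_self]
    split_ifs with h
    · obtain ⟨hv, rfl⟩ := h
      rw [card_insert_of_notMem (by simp [he]), hF]
      have := hj v hv
      simp only [full, mem_filter, mem_univ, true_and, not_le] at this
      omega
    · rw [hF]; exact hφ v i

/-- The round-robin one-factorisation of the complete graph on `N + 1` vertices, `N` odd, with
`none` as the vertex at infinity: `{a, b} ↦ a + b` and `{a, none} ↦ 2 a`. -/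
def roundRobin {N : ℕ} : Sym2 (Option (ZMod N)) → ZMod N :=
  Sym2.lift ⟨fun x y => x.getD (y.getD 0) + y.getD (x.getD 0), fun _ _ => add_comm _ _⟩

theorem roundRobin_injOn {N : ℕ} (hN : Odd N) (x : Option (ZMod N)) :
    Set.InjOn (fun y => roundRobin s(x, y)) {y | y ≠ x} := by
  have h2 : IsUnit (2 : ZMod N) := by
    exact_mod_cast (ZMod.isUnit_iff_coprime 2 N).2 (Nat.coprime_two_left.2 hN)
  rintro (_ | b) hb (_ | b') hb' h <;> cases x <;> simp_all [roundRobin]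
  exact h2.mul_left_cancel (by rw [two_mul, two_mul, h])

section ColorClass

variable {α : Type*} (G : SimpleGraph V) (c : Sym2 V → α) (i : α)

def colorClass : SimpleGraph V := fromRel fun u v => G.Adj u v ∧ c s(u, v) = i

variable {G c i}

@[simp]
theorem colorClass_adj {u v : V} :
    (colorClass G c i).Adj u v ↔ G.Adj u v ∧ c s(u, v) = i := by
  simp only [colorClass, fromRel_adj]
  constructor
  · rintro ⟨-, h | ⟨hadj, hc⟩⟩
    · exact h
    · exact ⟨hadj.symm, Sym2.eq_swap ▸ hc⟩
  · exact fun h => ⟨h.1.ne, .inl h⟩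

theorem deg_colorClass [Fintype V] [DecidableRel G.Adj] [DecidableEq α] (x : V) :
    deg (colorClass G c i) x = #{v ∈ G.neighborFinset x | c s(x, v) = i} := by
  rw [deg, ← Set.ncard_coe_finset]
  congr 1
  ext v
  simp

theorem not_hasMonoCopy_comp {H : SimpleGraph W} [Nonempty α] {r : ℕ} (e : α ↪ Fin r)
    (hc : ∀ i, ¬HasCopy H (colorClass G c i)) : ¬HasMonoCopy H G (e ∘ c) := by
  classical
  rintro ⟨i, f, hf⟩
  let j : α := if h : ∃ j, e j = i then h.choose else Classical.arbitrary α
  have hle : colorClass G (e ∘ c) i ≤ colorClass G c j := fun u v huv => by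
    rw [colorClass_adj] at huv ⊢
    have h : ∃ j, e j = i := ⟨_, huv.2⟩
    refine ⟨huv.1, e.injective ?_⟩
    simp only [j, dif_pos h, h.choose_spec]
    exact huv.2
  exact hc j ⟨(Hom.ofLE hle).comp f, hf⟩

end ColorClass

section SplitColoring

variable {κ ι : Type*}

/-- `U` stands for the set of high-degree vertices. -/
structure IsSplitColoring (G : SimpleGraph V) (U : Finset V) (ψ : Sym2 V → κ) (D : ℕ)
    (c : Sym2 V → κ ⊕ ι) : Prop where
  eq_inl_of_mem : ∀ u v, u ∈ U → v ∈ U → c s(u, v) = .inl (ψ s(u, v))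
  mem_iff_mem_of_eq_inl : ∀ u v a, c s(u, v) = .inl a → (u ∈ U ↔ v ∈ U)
  mem_iff_not_mem_of_eq_inr : ∀ u v b, c s(u, v) = .inr b → (u ∈ U ↔ v ∉ U)
  deg_le : ∀ x ∉ U, ∀ j, deg (colorClass G c j) x ≤ D

variable [DecidableEq V] (U : Finset V) (ψ φ : Sym2 V → κ) (β : V → V → ι)

def splitColoring : Sym2 V → κ ⊕ ι :=
  Sym2.lift ⟨fun u v => if u ∈ U then if v ∈ U then .inl (ψ s(u, v)) else .inr (β v u)
      else if v ∈ U then .inr (β u v) else .inl (φ s(u, v)), fun u v => by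
    dsimp only; split_ifs <;> simp [Sym2.eq_swap]⟩

theorem isSplitColoring_splitColoring [Fintype V] {G : SimpleGraph V} [DecidableRel G.Adj]
    [DecidableEq κ] [DecidableEq ι] {D : ℕ}
    (hφ : ∀ x ∉ U, ∀ a, #{v ∈ G.neighborFinset x | v ∉ U ∧ φ s(x, v) = a} ≤ D)
    (hβ : ∀ x ∉ U, ∀ b, #{v ∈ {v ∈ G.neighborFinset x | v ∈ U} | β x v = b} ≤ D) :
    IsSplitColoring G U ψ D (splitColoring U ψ φ β) where
  eq_inl_of_mem u v hu hv := by simp [splitColoring, hu, hv]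
  mem_iff_mem_of_eq_inl u v a h := by
    by_cases hu : u ∈ U <;> by_cases hv : v ∈ U <;> simp_all [splitColoring]
  mem_iff_not_mem_of_eq_inr u v b h := by
    by_cases hu : u ∈ U <;> by_cases hv : v ∈ U <;> simp_all [splitColoring]
  deg_le x hx j := by
    rw [deg_colorClass]
    rcases j with a | b
    · refine le_trans (card_le_card fun v hv => ?_) (hφ x hx a)
      by_cases hv' : v ∈ U <;> simp_all [splitColoring]
    · refine le_trans (card_le_card fun v hv => ?_) (hβ x hx b)
      by_cases hv' : v ∈ U <;> simp_all [splitColoring]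

end SplitColoring

theorem exists_isSplitColoring [Fintype V] [DecidableEq V] (G : SimpleGraph V)
    [DecidableRel G.Adj] {κ : Type*} [Fintype κ] [DecidableEq κ] [Nonempty κ] (U : Finset V)
    (ψ : Sym2 V → κ) {c D : ℕ} [NeZero c] (hκ : 2 * c ≤ Fintype.card κ + 1)
    (hdeg : ∀ x ∉ U, G.degree x ≤ c * D) :
    ∃ col : Sym2 V → κ ⊕ Fin c, IsSplitColoring G U ψ D col := by
  set F : Finset (Sym2 V) := {e ∈ G.edgeFinset | ∀ v ∈ e, v ∉ U}
  obtain ⟨φ, hφ⟩ := exists_coloring_card_incident_le F hκ (D := D) fun v => by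
    by_cases hv : v ∈ U
    · have : {e ∈ F | v ∈ e} = ∅ :=
        filter_eq_empty_iff.2 fun e he hve => (mem_filter.1 he).2 v hve hv
      simp [this]
    · refine le_trans (card_le_card fun e he => ?_)
        ((card_incidenceFinset_eq_degree G v).trans_le (hdeg v hv))
      simp only [F, mem_filter, mem_edgeFinset] at he
      exact (mem_incidenceFinset _ _ _).2 ⟨he.1.1, he.2⟩
  have hβ (x : V) : ∃ β : V → Fin c,
      x ∉ U → ∀ b, #{v ∈ {v ∈ G.neighborFinset x | v ∈ U} | β v = b} ≤ D := by
    by_cases hx : x ∈ U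
    · exact ⟨fun _ => 0, by simp [hx]⟩
    · obtain ⟨β, hβ⟩ := exists_card_fiber_le (ι := Fin c) {v ∈ G.neighborFinset x | v ∈ U}
        (z := D) (by simpa using (card_filter_le _ _).trans (hdeg x hx))
      exact ⟨β, fun _ => hβ⟩
  choose β hβ using hβ
  refine ⟨_, isSplitColoring_splitColoring U ψ φ β (fun x hx a => ?_) hβ⟩
  refine le_trans (card_le_card_of_injOn (fun v => s(x, v)) (fun v hv => ?_)
    fun v _ w _ h => Sym2.congr_right.1 h) (hφ x a)
  obtain ⟨hxv, hvU, hva⟩ : G.Adj x v ∧ v ∉ U ∧ φ s(x, v) = a := by simpa using hv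
  have hxvF : s(x, v) ∈ F := mem_filter.2 ⟨mem_edgeFinset.2 hxv, by simp [hx, hvU]⟩
  simp [hxvF, hva]

namespace IsSplitColoring

variable {κ ι : Type*} {G : SimpleGraph V} {U : Finset V} {ψ : Sym2 V → κ} {D : ℕ}
  {c : Sym2 V → κ ⊕ ι} {H : SimpleGraph W}

theorem mem_of_lt_deg [Finite V] (hc : IsSplitColoring G U ψ D c) {j : κ ⊕ ι}
    (f : H →g colorClass G c j) (hf : Function.Injective f) {a : W} (ha : D < deg H a) :
    f a ∈ U := by
  by_contra h
  exact (ha.trans_le (deg_le_deg_of_injective f hf a)).not_ge (hc.deg_le _ h j)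

theorem mem_iff_mem_of_inl (hc : IsSplitColoring G U ψ D c) {a : κ}
    (f : H →g colorClass G c (.inl a)) {x y : W} (hxy : H.Adj x y) : f x ∈ U ↔ f y ∈ U :=
  hc.mem_iff_mem_of_eq_inl _ _ a (colorClass_adj.1 (f.map_adj hxy)).2

theorem mem_iff_not_mem_of_inr (hc : IsSplitColoring G U ψ D c) {b : ι}
    (f : H →g colorClass G c (.inr b)) (x y : W) (hxy : H.Adj x y) : f x ∈ U ↔ f y ∉ U :=
  hc.mem_iff_not_mem_of_eq_inr _ _ b (colorClass_adj.1 (f.map_adj hxy)).2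

end IsSplitColoring

theorem IsSplitColoring.card_le_of_inl [Fintype W] {ι : Type*} {N : ℕ} (hN : Odd N)
    {G : SimpleGraph V} {U : Finset V} {cell : V → Option (ZMod N)} {D z : ℕ}
    {c : Sym2 V → ZMod N ⊕ ι} (hc : IsSplitColoring G U (roundRobin ∘ Sym2.map cell) D c)
    (hcell : ∀ x, #{v ∈ U | cell v = x} ≤ z) {H : SimpleGraph W} (hH : H.Preconnected)
    {a : ZMod N} (f : H →g colorClass G c (.inl a)) (hf : Function.Injective f) {a₀ : W}
    (ha₀ : f a₀ ∈ U) : Fintype.card W ≤ 2 * z := by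
  have : NeZero N := ⟨hN.pos.ne'⟩
  have hU : ∀ x, f x ∈ U :=
    hH.of_adj_imp (fun x y hxy => (hc.mem_iff_mem_of_inl f hxy).1) ha₀
  obtain ⟨S, hS, hcellS⟩ := hH.exists_card_le_two_of_mono (roundRobin_injOn hN)
    (g := cell ∘ f) (b := a) fun x y hxy _ => Sum.inl_injective
      ((hc.eq_inl_of_mem _ _ (hU x) (hU y)).symm.trans (colorClass_adj.1 (f.map_adj hxy)).2)
  calc Fintype.card W ≤ z * #S := card_le_mul_of_injective hf hcell hU hcellS
    _ ≤ 2 * z := by rw [mul_comm]; exact Nat.mul_le_mul_right z hS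

end

theorem stmt_9 {W : Type*} [Fintype W] [DecidableEq W] (H : SimpleGraph W)
    (V1 V2 : Finset W) (hdisj : Disjoint V1 V2) (hcover : V1 ∪ V2 = Finset.univ)
    (hbip : ∀ u v, H.Adj u v → (u ∈ V1 ∧ v ∈ V2) ∨ (u ∈ V2 ∧ v ∈ V1))
    (hconn : H.Connected)
    (hΔ : V2.sup (deg H) ≤ V1.sup (deg H)) (hΔ2 : 2 ≤ V2.sup (deg H))
    (r : ℕ) (hr : 4 ≤ r) (hlarge : r ^ 2 ≤ V1.card + V2.card)
    {V : Type*} [Fintype V] (G : SimpleGraph V)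
    (hE : 32 * G.edgeSet.ncard <
      r ^ 2 * (V2.sup (deg H) - 1) * (V1.card + V2.card)) :
    ∃ c : Sym2 V → Fin r, ¬ HasMonoCopy H G c := by
  classical
  set Δ₂ := V2.sup (deg H)
  set m := V1.card + V2.card
  set c := r / 3
  set w := (r - c + 1) / 2
  set N := 2 * w - 1
  have hN : Odd N := ⟨w - 1, by omega⟩
  have : NeZero N := ⟨hN.pos.ne'⟩
  have : NeZero c := ⟨by omega⟩
  have hcard : Fintype.card (Option (ZMod N)) = 2 * w := by simp [ZMod.card]; omega
  rw [← coe_edgeFinset, Set.ncard_coe_finset] at hE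
  set U : Finset V := {v | c * (Δ₂ - 1) < G.degree v}
  obtain ⟨cell, hcell⟩ := U.exists_card_fiber_le (z := (m - 1) / 2)
    ((G.card_lt_degree_le hr hlarge hE).trans_eq (by rw [hcard]))
  obtain ⟨col, hcol⟩ := exists_isSplitColoring G U (roundRobin ∘ Sym2.map cell) (c := c)
    (D := Δ₂ - 1) (by simp [ZMod.card]; omega) fun x hx => by simpa [U] using hx
  obtain ⟨e⟩ : Nonempty (ZMod N ⊕ Fin c ↪ Fin r) :=
    Function.Embedding.nonempty_of_card_le (by simp [ZMod.card]; omega)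
  refine ⟨e ∘ col, not_hasMonoCopy_comp e fun j ⟨f, hf⟩ => ?_⟩
  have hhigh (a : W) (ha : Δ₂ ≤ deg H a) : f a ∈ U := hcol.mem_of_lt_deg f hf (by omega)
  obtain ⟨w₂, hw₂, hdeg₂⟩ := exists_mem_eq_sup_of_pos (show 0 < Δ₂ by omega)
  rcases j with a | b
  · have hW : Fintype.card W = m := by
      rw [← card_univ, ← hcover, card_union_of_disjoint hdisj]
    have := hcol.card_le_of_inl hN hcell hconn.preconnected f hf (hhigh w₂ hdeg₂.le)
    have := @Fintype.card_pos _ _ hconn.nonempty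
    omega
  · obtain ⟨w₁, hw₁, hdeg₁⟩ := exists_mem_eq_sup_of_pos (show 0 < V1.sup (deg H) by omega)
    exact hconn.preconnected.not_and_of_adj_iff_not (disjoint_coe.2 hdisj) hbip
      (hcol.mem_iff_not_mem_of_inr f) hw₁ hw₂ ⟨hhigh w₁ (hdeg₁ ▸ hΔ), hhigh w₂ hdeg₂.le⟩
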